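/- Let (Ω, F, P) be a probability space, let η ∈ (0, 1/2), and let f : [0,1] → ℝ be nondecreasing and continuous. For each n ∈ ℕ let m_n ∈ ℕ satisfy m_n ≥ 2/η and m_n → ∞, and let Ŷ_{n,1}, …, Ŷ_{n,m_n−1} be real-valued random variables on Ω. For each ω ∈ Ω let (Ỹ_{n,1}(ω),…,Ỹ_{n,m_n−1}(ω)) be an isotonic regression of (Ŷ_{n,1}(ω),…,Ŷ_{n,m_n−1}(ω)), and let G̃_n(ω) denote the linear interpolant of the values Ỹ_{n,j}(ω) at the points j/m_n, j = 1,…,m_n−1. If the random variables M_n = max_{1≤j≤m_n−1} |Ŷ_{n,j} − f(j/m_n)| converge to 0 in probability, then sup_{p∈[η,1−η]} |G̃_n(p) − f(p)| converges to 0 in probability. -/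

import Mathlib

open MeasureTheory Filter

/-!
Isotonic regression does not move the data away from any monotone sequence in sup-norm, so the
fitted grid values stay within the grid error of the monotone target `f`. Every `p ∈ [η, 1 - η]`
lies in a grid cell `[j/m, (j+1)/m]` with `1 ≤ j` and `j + 1 ≤ m - 1` once the mesh is below `η`;
there the interpolant lies between two fitted values, and uniform continuity of `f` over one mesh
width handles the rest. So, for large `n`, a sup-error above `ε` forces a grid error above `ε/2`.
-/

lemma sq_sub_clamp_le {a b v x : ℝ} (hav : a ≤ v) (hvb : v ≤ b) :
    (v - max a (min b x)) ^ 2 ≤ (v - x) ^ 2 := by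
  rcases le_total x a with hxa | hax
  · rw [min_eq_right (hxa.trans (hav.trans hvb)), max_eq_left hxa]
    nlinarith
  rcases le_total b x with hbx | hxb
  · rw [min_eq_left hbx, max_eq_right (hav.trans hvb)]
    nlinarith
  · rw [min_eq_right hxb, max_eq_right hax]

lemma sq_sub_clamp_lt {a b v x : ℝ} (hav : a ≤ v) (hvb : v ≤ b) (hx : x ∉ Set.Icc a b) :
    (v - max a (min b x)) ^ 2 < (v - x) ^ 2 := by
  rcases lt_or_ge x a with hxa | hax
  · rw [min_eq_right (hxa.le.trans (hav.trans hvb)), max_eq_left hxa.le]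
    nlinarith
  have hbx : b < x := by
    by_contra! hxb
    exact hx ⟨hax, hxb⟩
  rw [min_eq_left hbx.le, max_eq_right (hav.trans hvb)]
  nlinarith

section IsotonicRegression

variable {ι : Type*} [Preorder ι]

def IsIsotonicRegression (s : Finset ι) (v w : ι → ℝ) : Prop :=
  MonotoneOn w s ∧ ∀ w' : ι → ℝ, MonotoneOn w' s →
    ∑ j ∈ s, (v j - w j) ^ 2 ≤ ∑ j ∈ s, (v j - w' j) ^ 2

/-- If the data lie within `c` of a monotone sequence `u`, so does their isotonic regression:
otherwise clamping the regression into the band `[u - c, u + c]` would keep it monotone and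
strictly decrease the sum of squares. -/
lemma IsIsotonicRegression.abs_sub_le {s : Finset ι} {v w u : ι → ℝ} {c : ℝ}
    (hw : IsIsotonicRegression s v w) (hu : MonotoneOn u s)
    (hv : ∀ j ∈ s, |v j - u j| ≤ c) : ∀ j ∈ s, |w j - u j| ≤ c := by
  by_contra! ⟨j₀, hj₀, hj₀c⟩
  set w' : ι → ℝ := fun j => max (u j - c) (min (u j + c) (w j))
  have hw' : MonotoneOn w' s := fun i hi j hj hij => by
    have := hu hi hj hij
    exact max_le_max (by linarith) (min_le_min (by linarith) (hw.1 hi hj hij))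
  have hband : ∀ j ∈ s, u j - c ≤ v j ∧ v j ≤ u j + c := fun j hj => by
    have := abs_le.mp (hv j hj)
    constructor <;> linarith
  have hle : ∀ j ∈ s, (v j - w' j) ^ 2 ≤ (v j - w j) ^ 2 := fun j hj =>
    sq_sub_clamp_le (hband j hj).1 (hband j hj).2
  have hlt : (v j₀ - w' j₀) ^ 2 < (v j₀ - w j₀) ^ 2 := by
    refine sq_sub_clamp_lt (hband j₀ hj₀).1 (hband j₀ hj₀).2 fun ⟨h₁, h₂⟩ => hj₀c.not_ge ?_
    exact abs_le.mpr ⟨by linarith, by linarith⟩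
  exact (Finset.sum_lt_sum hle ⟨j₀, hj₀, hlt⟩).not_ge (hw.2 w' hw')

end IsotonicRegression

lemma monotoneOn_finsetIcc_iff {ι : Type*} [Preorder ι] [LocallyFiniteOrder ι] {a b : ι}
    {w : ι → ℝ} :
    MonotoneOn w (Finset.Icc a b : Set ι) ↔ ∀ i j, a ≤ i → i ≤ j → j ≤ b → w i ≤ w j := by
  simp only [MonotoneOn, Finset.coe_Icc, Set.mem_Icc]
  exact ⟨fun h i j hai hij hjb => h ⟨hai, hij.trans hjb⟩ ⟨hai.trans hij, hjb⟩ hij,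
    fun h i hi j hj hij => h i j hi.1 hij hj.2⟩

lemma lineInterp_mem_Icc {a b x y₀ y₁ : ℝ} (hab : a < b) (hx : x ∈ Set.Icc a b)
    (hy : y₀ ≤ y₁) : y₀ + (x - a) * (y₁ - y₀) / (b - a) ∈ Set.Icc y₀ y₁ := by
  have hba : 0 < b - a := sub_pos.mpr hab
  have hslope : 0 ≤ (x - a) * (y₁ - y₀) := mul_nonneg (by linarith [hx.1]) (by linarith)
  constructor
  · linarith [div_nonneg hslope hba.le]
  · have : (x - a) * (y₁ - y₀) / (b - a) ≤ y₁ - y₀ := by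
      rw [div_le_iff₀ hba]
      nlinarith [hx.2]
    linarith

lemma exists_gridCell {η p : ℝ} {m : ℕ} (hη : 0 < η) (hηm : 1 / η < m)
    (hp : p ∈ Set.Icc η (1 - η)) :
    ∃ j : ℕ, 1 ≤ j ∧ j + 1 ≤ m - 1 ∧ p ∈ Set.Icc ((j : ℝ) / m) (((j : ℝ) + 1) / m) := by
  have hm : (0 : ℝ) < m := (one_div_pos.mpr hη).trans hηm
  have hηm' : 1 < η * m := by rwa [div_lt_iff₀ hη, mul_comm] at hηm
  have hpm₁ : 1 < p * m := by nlinarith [hp.1]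
  have hpm₂ : p * m < m - 1 := by nlinarith [hp.2]
  have hfloor := Nat.floor_le (zero_le_one.trans hpm₁.le)
  refine ⟨⌊p * m⌋₊, Nat.le_floor (by exact_mod_cast hpm₁.le), ?_, ?_, ?_⟩
  · have : ((⌊p * m⌋₊ + 1 : ℕ) : ℝ) < m := by push_cast; linarith
    have := Nat.cast_lt.mp this
    omega
  · rw [div_le_iff₀ hm]; exact hfloor
  · rw [le_div_iff₀ hm]; exact (Nat.lt_floor_add_one _).le

lemma abs_sub_le_of_mem_Icc {a b x z r : ℝ} (hx : x ∈ Set.Icc a b) (ha : |a - z| ≤ r)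
    (hb : |b - z| ≤ r) : |x - z| ≤ r := by
  rw [abs_le] at *
  constructor <;> linarith [hx.1, hx.2]

lemma MonotoneOn.comp_gridPoint {f : ℝ → ℝ} (hf : MonotoneOn f (Set.Icc 0 1)) (m : ℕ) :
    MonotoneOn (fun j : ℕ => f (j / m)) (Set.Iic m) := fun i hi j hj hij =>
  hf (unitInterval.div_mem (Nat.cast_nonneg i) (Nat.cast_nonneg m) (by exact_mod_cast hi))
    (unitInterval.div_mem (Nat.cast_nonneg j) (Nat.cast_nonneg m) (by exact_mod_cast hj))
    (by gcongr)

lemma abs_interpolant_sub_le {η δ c c' : ℝ} {m : ℕ} {f g : ℝ → ℝ} {y yt : ℕ → ℝ}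
    (hη : 0 < η) (hηm : 1 / η < m) (hδ : 0 < δ) (hδm : 1 / δ < m)
    (hf_mono : MonotoneOn f (Set.Icc 0 1))
    (hfδ : ∀ x ∈ Set.Icc (0 : ℝ) 1, ∀ x' ∈ Set.Icc (0 : ℝ) 1, dist x x' < δ →
      dist (f x) (f x') < c')
    (hyt : IsIsotonicRegression (Finset.Icc 1 (m - 1)) y yt)
    (hg : ∀ j, 1 ≤ j → j + 1 ≤ m - 1 →
      ∀ x ∈ Set.Icc ((j : ℝ) / (m : ℝ)) (((j : ℝ) + 1) / (m : ℝ)),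
        g x = yt j + (x - (j : ℝ) / (m : ℝ)) * (yt (j + 1) - yt j) /
          (((j : ℝ) + 1) / (m : ℝ) - (j : ℝ) / (m : ℝ)))
    (hy : ∀ j ∈ Finset.Icc 1 (m - 1), |y j - f ((j : ℝ) / m)| ≤ c) :
    ∀ p ∈ Set.Icc η (1 - η), |g p - f p| ≤ c + c' := by
  have hm : (0 : ℝ) < m := (one_div_pos.mpr hη).trans hηm
  have hgrid : MonotoneOn (fun j : ℕ => f (j / m)) (Finset.Icc 1 (m - 1) : Set ℕ) :=
    (hf_mono.comp_gridPoint m).mono fun j hj => by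
      simp only [Finset.coe_Icc, Set.mem_Icc] at hj
      exact Set.mem_Iic.mpr (by omega)
  have hyt_near := hyt.abs_sub_le hgrid hy
  intro p hp
  obtain ⟨j, hj₁, hjm, hpj⟩ := exists_gridCell hη hηm hp
  have hp01 : p ∈ Set.Icc (0 : ℝ) 1 := ⟨hη.le.trans hp.1, hp.2.trans (by linarith)⟩
  have hmesh : ((j : ℝ) + 1) / m - j / m = 1 / m := by field_simp; ring
  have hmeshδ : 1 / (m : ℝ) < δ := by rwa [one_div_lt hm hδ]
  have near (k : ℕ) (hk : k ∈ Finset.Icc 1 (m - 1)) (hpk : |(k : ℝ) / m - p| ≤ 1 / m) :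
      |yt k - f p| ≤ c + c' := by
    have hkm : (k : ℝ) ≤ m := by
      have := (Finset.mem_Icc.mp hk).2
      exact_mod_cast (show k ≤ m by omega)
    have hosc := hfδ _ (unitInterval.div_mem (Nat.cast_nonneg k) hm.le hkm) p hp01
      (by rw [Real.dist_eq]; exact hpk.trans_lt hmeshδ)
    rw [Real.dist_eq] at hosc
    calc |yt k - f p| ≤ |yt k - f (k / m)| + |f (k / m) - f p| := abs_sub_le _ _ _
      _ ≤ c + c' := add_le_add (hyt_near k hk) hosc.le
  have hcell := lineInterp_mem_Icc (by rw [← sub_pos, hmesh]; positivity) hpj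
    (hyt.1 (Finset.mem_Icc.mpr ⟨hj₁, by omega⟩) (Finset.mem_Icc.mpr ⟨by omega, hjm⟩) j.le_succ)
  rw [← hg j hj₁ hjm p hpj] at hcell
  refine abs_sub_le_of_mem_Icc hcell (near j (Finset.mem_Icc.mpr ⟨hj₁, by omega⟩) ?_)
    (near (j + 1) (Finset.mem_Icc.mpr ⟨by omega, hjm⟩) ?_)
  · rw [abs_le]; constructor <;> linarith [hpj.1, hpj.2]
  · push_cast; rw [abs_le]; constructor <;> linarith [hpj.1, hpj.2]

theorem ioqr_estimator_uniform_consistency_general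
    {Ω : Type*} [MeasurableSpace Ω] (P : Measure Ω)
    (η : ℝ) (hη : η ∈ Set.Ioo (0 : ℝ) (1 / 2))
    (f : ℝ → ℝ)
    (hf_mono : MonotoneOn f (Set.Icc 0 1))
    (hf_cont : ContinuousOn f (Set.Icc 0 1))
    (m : ℕ → ℕ)
    (hm_tendsto : Tendsto m atTop atTop)
    (Y Yt : ℕ → ℕ → Ω → ℝ)
    (hYt_mono : ∀ n, ∀ ω : Ω, ∀ i j, 1 ≤ i → i ≤ j → j ≤ m n - 1 → Yt n i ω ≤ Yt n j ω)
    (hYt_min : ∀ n, ∀ ω : Ω, ∀ w : ℕ → ℝ,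
      (∀ i j, 1 ≤ i → i ≤ j → j ≤ m n - 1 → w i ≤ w j) →
      ∑ j ∈ Finset.Icc 1 (m n - 1), (Y n j ω - Yt n j ω) ^ 2 ≤
        ∑ j ∈ Finset.Icc 1 (m n - 1), (Y n j ω - w j) ^ 2)
    (G : ℕ → Ω → ℝ → ℝ)
    (hG : ∀ n, ∀ ω : Ω, ∀ j, 1 ≤ j → j + 1 ≤ m n - 1 →
      ∀ x ∈ Set.Icc ((j : ℝ) / (m n : ℝ)) (((j : ℝ) + 1) / (m n : ℝ)),
        G n ω x = Yt n j ω + (x - (j : ℝ) / (m n : ℝ)) * (Yt n (j + 1) ω - Yt n j ω) /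
          (((j : ℝ) + 1) / (m n : ℝ) - (j : ℝ) / (m n : ℝ)))
    (hconv : ∀ ε : ℝ, 0 < ε → Tendsto
      (fun n => P {ω | ∃ j ∈ Finset.Icc 1 (m n - 1), ε < |Y n j ω - f ((j : ℝ) / (m n : ℝ))|})
      atTop (nhds 0)) :
    ∀ ε : ℝ, 0 < ε → Tendsto
      (fun n => P {ω | ∃ p ∈ Set.Icc η (1 - η), ε < |G n ω p - f p|})
      atTop (nhds 0) := by
  intro ε hε
  obtain ⟨δ, hδ, hfδ⟩ := Metric.uniformContinuousOn_iff.mp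
    (isCompact_Icc.uniformContinuousOn_of_continuous hf_cont) (ε / 2) (half_pos hε)
  have hm : Tendsto (fun n => (m n : ℝ)) atTop atTop :=
    tendsto_natCast_atTop_atTop.comp hm_tendsto
  have hYt (n : ℕ) (ω : Ω) :
      IsIsotonicRegression (Finset.Icc 1 (m n - 1)) (Y n · ω) (Yt n · ω) :=
    ⟨monotoneOn_finsetIcc_iff.mpr (hYt_mono n ω),
      fun w hw => hYt_min n ω w (monotoneOn_finsetIcc_iff.mp hw)⟩
  refine tendsto_of_tendsto_of_tendsto_of_le_of_le' tendsto_const_nhds (hconv (ε / 2) (half_pos hε))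
    (Eventually.of_forall fun _ => zero_le) ?_
  filter_upwards [hm.eventually_gt_atTop (1 / η), hm.eventually_gt_atTop (1 / δ)] with n hηm hδm
  refine measure_mono fun ω ⟨p, hp, hεp⟩ => ?_
  by_contra hgrid
  simp only [Set.mem_ofPred_eq, not_exists, not_and, not_lt] at hgrid
  have := abs_interpolant_sub_le hη.1 hηm hδ hδm hf_mono hfδ (hYt n ω) (hG n ω) hgrid p hp
  linarith [add_halves ε]

/-- Theorem 3.2(ii) of the paper: uniform consistency on `[η, 1−η]` of the IOQR
estimator. If for each `n`, `ω` the values `Yt n · ω` are an isotonic regression of the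
grid values `Y n · ω` over the indices `1,…,mₙ−1`, `G n ω` is the linear interpolant of
the `Yt n j ω` at the grid points `j/mₙ`, and the maximal error of `Y n j` against the
nondecreasing continuous target `f` at the grid points converges to `0` in probability,
then the sup-error of `G n` over `[η, 1−η]` converges to `0` in probability. -/
theorem ioqr_estimator_uniform_consistency
    {Ω : Type*} [MeasurableSpace Ω] (P : Measure Ω) [IsProbabilityMeasure P]
    (η : ℝ) (hη : η ∈ Set.Ioo (0 : ℝ) (1 / 2))
    (f : ℝ → ℝ)
    (hf_mono : MonotoneOn f (Set.Icc 0 1))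
    (hf_cont : ContinuousOn f (Set.Icc 0 1))
    (m : ℕ → ℕ)
    (hm_ge : ∀ n, 2 / η ≤ (m n : ℝ))
    (hm_tendsto : Tendsto m atTop atTop)
    (Y Yt : ℕ → ℕ → Ω → ℝ)
    (hYt_mono : ∀ n, ∀ ω : Ω, ∀ i j, 1 ≤ i → i ≤ j → j ≤ m n - 1 → Yt n i ω ≤ Yt n j ω)
    (hYt_min : ∀ n, ∀ ω : Ω, ∀ w : ℕ → ℝ,
      (∀ i j, 1 ≤ i → i ≤ j → j ≤ m n - 1 → w i ≤ w j) →
      ∑ j ∈ Finset.Icc 1 (m n - 1), (Y n j ω - Yt n j ω) ^ 2 ≤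
        ∑ j ∈ Finset.Icc 1 (m n - 1), (Y n j ω - w j) ^ 2)
    (G : ℕ → Ω → ℝ → ℝ)
    (hG : ∀ n, ∀ ω : Ω, ∀ j, 1 ≤ j → j + 1 ≤ m n - 1 →
      ∀ x ∈ Set.Icc ((j : ℝ) / (m n : ℝ)) (((j : ℝ) + 1) / (m n : ℝ)),
        G n ω x = Yt n j ω + (x - (j : ℝ) / (m n : ℝ)) * (Yt n (j + 1) ω - Yt n j ω) /
          (((j : ℝ) + 1) / (m n : ℝ) - (j : ℝ) / (m n : ℝ)))
    (hconv : ∀ ε : ℝ, 0 < ε → Tendsto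
      (fun n => P {ω | ∃ j ∈ Finset.Icc 1 (m n - 1), ε < |Y n j ω - f ((j : ℝ) / (m n : ℝ))|})
      atTop (nhds 0)) :
    ∀ ε : ℝ, 0 < ε → Tendsto
      (fun n => P {ω | ∃ p ∈ Set.Icc η (1 - η), ε < |G n ω p - f p|})
      atTop (nhds 0) :=
  ioqr_estimator_uniform_consistency_general P η hη f hf_mono hf_cont m hm_tendsto Y Yt hYt_mono
    hYt_min G hG hconv
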